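/- (Counting number equals functional degree for one monomial) Let n ∈ ℕ^N with each nᵢ ≥ 1, b ∈ ℤ nonzero, and f : ℤ^N → ℤ defined by f(x) = binom(x₁,n₁)⋯binom(x_N,n_N)·b. Then Δ_{e₁}^{n₁}⋯Δ_{e_N}^{n_N} f is the nonzero constant function b, while for any m ∈ ℕ^N with |m| = |n| + 1 one has Δ_{e₁}^{m₁}⋯Δ_{e_N}^{m_N} f ≡ 0. -/

import Mathlib

def deltaOp {A B : Type*} [AddCommGroup A] [AddCommGroup B] (a : A) (f : A → B) : A → B :=
  fun x => f (x + a) - f x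

def compFamily {F : Type*} {d : ℕ} (ops : Fin d → (F → F)) : F → F :=
  (List.ofFn ops).foldr (· ∘ ·) id

section aux

variable {N : ℕ} (b : ℤ)

/-- The monomial function with exponent vector `m`. -/
private def Fm (m : Fin N → ℕ) : (Fin N → ℤ) → ℤ :=
  fun x => (∏ i : Fin N, Ring.choose (x i) (m i)) * b

private lemma deltaOp_zero {A B : Type*} [AddCommGroup A] [AddCommGroup B] (a : A) :
    deltaOp a (0 : A → B) = 0 := by
  funext x; simp [deltaOp]

private lemma deltaOp_iterate_zero {A B : Type*} [AddCommGroup A] [AddCommGroup B] (a : A)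
    (t : ℕ) : (deltaOp a)^[t] (0 : A → B) = 0 :=
  Function.iterate_fixed (deltaOp_zero a) t

private lemma step_pos (i : Fin N) (m : Fin N → ℕ) (h : 1 ≤ m i) :
    deltaOp (Pi.single i (1 : ℤ)) (Fm b m) = Fm b (Function.update m i (m i - 1)) := by
  funext x
  obtain ⟨k, hk⟩ : ∃ k, m i = k + 1 := ⟨m i - 1, (Nat.succ_pred_eq_of_pos h).symm⟩
  simp only [deltaOp, Fm]
  rw [← Finset.mul_prod_erase Finset.univ _ (Finset.mem_univ i),
      ← Finset.mul_prod_erase Finset.univ (fun j => Ring.choose (x j) (m j)) (Finset.mem_univ i),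
      ← Finset.mul_prod_erase Finset.univ
        (fun j => Ring.choose (x j) (Function.update m i (m i - 1) j)) (Finset.mem_univ i)]
  have h1 : ∀ j ∈ Finset.univ.erase i,
      Ring.choose (((x + Pi.single i (1 : ℤ) : Fin N → ℤ)) j) (m j) = Ring.choose (x j) (m j) := by
    intro j hj
    have hji : j ≠ i := Finset.ne_of_mem_erase hj
    simp [Pi.single_eq_of_ne hji]
  have h2 : ∀ j ∈ Finset.univ.erase i,
      Ring.choose (x j) (Function.update m i (m i - 1) j) = Ring.choose (x j) (m j) := by
    intro j hj
    have hji : j ≠ i := Finset.ne_of_mem_erase hj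
    simp [Function.update_of_ne hji]
  rw [Finset.prod_congr rfl h1, Finset.prod_congr rfl h2]
  have hxi : ((x + Pi.single i (1 : ℤ) : Fin N → ℤ)) i = x i + 1 := by simp
  rw [hxi, Function.update_self, hk]
  have hp : Ring.choose (x i + 1) (k + 1) = Ring.choose (x i) k + Ring.choose (x i) (k + 1) :=
    Ring.choose_succ_succ (x i) k
  rw [hp]
  simp only [Nat.add_sub_cancel]
  ring

private lemma step_zero (i : Fin N) (m : Fin N → ℕ) (h : m i = 0) :
    deltaOp (Pi.single i (1 : ℤ)) (Fm b m) = 0 := by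
  funext x
  simp only [deltaOp, Fm, Pi.zero_apply]
  have key : ∀ y : Fin N → ℤ, (∏ j : Fin N, Ring.choose (y j) (m j)) =
      ∏ j ∈ Finset.univ.erase i, Ring.choose (y j) (m j) := by
    intro y
    rw [← Finset.mul_prod_erase Finset.univ _ (Finset.mem_univ i), h,
      Ring.choose_zero_right, one_mul]
  rw [key, key]
  have h1 : ∀ j ∈ Finset.univ.erase i,
      Ring.choose (((x + Pi.single i (1 : ℤ) : Fin N → ℤ)) j) (m j) = Ring.choose (x j) (m j) := by
    intro j hj
    have hji : j ≠ i := Finset.ne_of_mem_erase hj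
    simp [Pi.single_eq_of_ne hji]
  rw [Finset.prod_congr rfl h1]
  ring

private lemma iter_lemma (i : Fin N) (m : Fin N → ℕ) (t : ℕ) :
    (deltaOp (Pi.single i (1 : ℤ)))^[t] (Fm b m) =
      if t ≤ m i then Fm b (Function.update m i (m i - t)) else 0 := by
  induction t with
  | zero =>
    simp only [Function.iterate_zero, id_eq, Nat.zero_le, if_true, Nat.sub_zero]
    rw [Function.update_eq_self]
  | succ t ih =>
    rw [Function.iterate_succ_apply', ih]
    by_cases ht : t ≤ m i
    · rw [if_pos ht]
      by_cases ht' : t + 1 ≤ m i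
      · rw [if_pos ht']
        have h1 : 1 ≤ Function.update m i (m i - t) i := by
          rw [Function.update_self]; omega
        rw [step_pos b i _ h1]
        have harg : Function.update (Function.update m i (m i - t)) i
            (Function.update m i (m i - t) i - 1) = Function.update m i (m i - (t + 1)) := by
          funext j
          by_cases hj : j = i
          · subst hj; simp only [Function.update_self]; omega
          · simp [Function.update_of_ne hj]
        rw [harg]
      · rw [if_neg ht']
        have h0 : Function.update m i (m i - t) i = 0 := by
          rw [Function.update_self]; omega
        exact step_zero b i _ h0
    · rw [if_neg ht, if_neg (by omega)]
      exact deltaOp_zero _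

private lemma foldr_comp_apply {F : Type*} (l : List (F → F)) (f : F) :
    (l.foldr (· ∘ ·) id) f = l.foldr (fun g y => g y) f := by
  induction l with
  | nil => rfl
  | cons g l ih => simp [List.foldr_cons, ih]

private lemma fold_lemma (k : Fin N → ℕ) (l : List (Fin N)) (hl : l.Nodup) (m : Fin N → ℕ) :
    l.foldr (fun i y => (deltaOp (Pi.single i (1 : ℤ)))^[k i] y) (Fm b m) =
      if ∀ i ∈ l, k i ≤ m i then
        Fm b (fun j => if j ∈ l then m j - k j else m j) else 0 := by
  induction l with
  | nil => simp
  | cons i l ih =>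
    have hnd := List.nodup_cons.mp hl
    rw [List.foldr_cons, ih hnd.2]
    by_cases hall : ∀ j ∈ l, k j ≤ m j
    · rw [if_pos hall]
      set m' : Fin N → ℕ := fun j => if j ∈ l then m j - k j else m j with hm'
      have hm'i : m' i = m i := by simp [hm', hnd.1]
      rw [iter_lemma b i m' (k i), hm'i]
      by_cases hki : k i ≤ m i
      · rw [if_pos hki, if_pos (by
          intro j hj
          rcases List.mem_cons.mp hj with rfl | hj'
          · exact hki
          · exact hall j hj')]
        have harg : Function.update m' i (m i - k i) =
            fun j => if j ∈ i :: l then m j - k j else m j := by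
          funext j
          by_cases hj : j = i
          · subst hj
            simp [Function.update_self, List.mem_cons]
          · rw [Function.update_of_ne hj, hm']
            simp only [List.mem_cons]
            by_cases hjl : j ∈ l <;> simp [hjl, hj]
        rw [harg]
      · rw [if_neg hki, if_neg (by
          intro hcon
          exact hki (hcon i (List.mem_cons_self)))]
    · rw [if_neg hall, if_neg (by
        intro hcon
        exact hall fun j hj => hcon j (List.mem_cons_of_mem i hj))]
      exact deltaOp_iterate_zero _ _

private lemma compFamily_monomial (k m : Fin N → ℕ) :
    compFamily (fun i => (deltaOp (Pi.single i (1 : ℤ)))^[k i]) (Fm b m) =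
      if ∀ i, k i ≤ m i then
        Fm b (fun j => m j - k j) else 0 := by
  have h0 : compFamily (fun i => (deltaOp (Pi.single i (1 : ℤ)))^[k i]) (Fm b m) =
      (List.finRange N).foldr (fun i y => (deltaOp (Pi.single i (1 : ℤ)))^[k i] y) (Fm b m) := by
    rw [compFamily, foldr_comp_apply, List.ofFn_eq_map, List.foldr_map]
  rw [h0, fold_lemma b k (List.finRange N) (List.nodup_finRange N) m]
  simp [List.mem_finRange]

end aux

/-- Counting number equals functional degree for a single monomial. -/
theorem count_eq_fdeg_single_monomial {N : ℕ}
    (n : Fin N → ℕ) (hn : ∀ i, 1 ≤ n i) (b : ℤ) (hb : b ≠ 0)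
    (f : (Fin N → ℤ) → ℤ)
    (hf : f = fun x => (∏ i : Fin N, Ring.choose (x i) (n i)) * b) :
    compFamily (fun i => (deltaOp (Pi.single i (1 : ℤ)))^[n i]) f = (fun _ => b) ∧
    (∀ m : Fin N → ℕ, ∑ i : Fin N, m i = (∑ i : Fin N, n i) + 1 →
        compFamily (fun i => (deltaOp (Pi.single i (1 : ℤ)))^[m i]) f = 0) := by
  have hfF : f = Fm b n := by rw [hf]; rfl
  constructor
  · rw [hfF, compFamily_monomial b n n, if_pos (fun i => le_refl _)]
    funext x
    simp [Fm]
  · intro m hm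
    rw [hfF, compFamily_monomial b m n]
    rw [if_neg]
    intro hcon
    have : ∑ i : Fin N, m i ≤ ∑ i : Fin N, n i := Finset.sum_le_sum fun i _ => hcon i
    omega
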